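/- Let Γ be a torsionfree group acting by ℤ-algebra automorphisms on a commutative ℤ-algebra D generated by idempotents. Then there exist a Γ-semilattice E such that Γ acts freely on E× (i.e., τ_g(e) = e for some e ∈ E× implies g = 1) and a surjective Γ-equivariant ℤ-algebra homomorphism φ: ℤ[E×] → D. -/

import Mathlib

set_option linter.unusedSectionVars false

/-- A monoid is torsion-free if no nontrivial element has finite order (the meaning of
Mathlib's former `Monoid.IsTorsionFree`, which has been removed). -/
def Monoid.IsTorsionFree (G : Type*) [Monoid G] : Prop :=
  ∀ g : G, g ≠ 1 → ¬IsOfFinOrder g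

/-- A *semilattice with zero*: a commutative idempotent semigroup with an
absorbing element `0`. -/
class SemilatticeWithZero (E : Type) extends CommSemigroup E, Zero E where
  mul_idem : ∀ e : E, e * e = e
  zero_mul : ∀ e : E, 0 * e = 0

namespace IndRes

variable {E : Type} [SemilatticeWithZero E]

/-- `single e c`, viewed in the semigroup algebra `ℤ[E]`. -/
noncomputable def sgl (e : E) (c : ℤ) : MonoidAlgebra ℤ E := MonoidAlgebra.ofCoeff (Finsupp.single e c)

/-- Truncation map deleting the coefficient at `0`. -/
noncomputable def T (x : MonoidAlgebra ℤ E) : MonoidAlgebra ℤ E := x - sgl 0 (x.coeff 0)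

lemma sgl_apply_self (e : E) (c : ℤ) : (sgl e c).coeff e = c := Finsupp.single_eq_same

lemma sgl_apply_ne (e d : E) (c : ℤ) (h : e ≠ d) : (sgl e c).coeff d = 0 := Finsupp.single_eq_of_ne h.symm

lemma sgl_add (e : E) (c d : ℤ) : sgl e (c + d) = sgl e c + sgl e d := by
  unfold sgl; rw [Finsupp.single_add, MonoidAlgebra.ofCoeff_add]

lemma sgl_sub (e : E) (c d : ℤ) : sgl e (c - d) = sgl e c - sgl e d := by
  unfold sgl; rw [Finsupp.single_sub, MonoidAlgebra.ofCoeff_sub]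

lemma T_apply_zero (x : MonoidAlgebra ℤ E) : (T x).coeff 0 = 0 := by
  show ((x - sgl 0 (x.coeff 0) : MonoidAlgebra ℤ E)).coeff 0 = 0
  rw [MonoidAlgebra.coeff_sub, Finsupp.sub_apply, sgl_apply_self, sub_self]

/-- `ℤ[E^×]`, realized as the additive subgroup of the semigroup algebra
`ℤ[E]` consisting of the elements whose coefficient at `0` vanishes; it is the free
`ℤ`-module with basis `E^× = E \ {0}`. -/
noncomputable def ZS (E : Type) [SemilatticeWithZero E] : AddSubgroup (MonoidAlgebra ℤ E) where
  carrier := {x | x.coeff 0 = 0}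
  zero_mem' := rfl
  add_mem' := by
    intro a b ha hb
    simp only [Set.mem_setOf_eq] at *
    rw [MonoidAlgebra.coeff_add, Finsupp.add_apply, ha, hb, add_zero]
  neg_mem' := by
    intro a ha
    simp only [Set.mem_setOf_eq] at *
    rw [MonoidAlgebra.coeff_neg, Finsupp.neg_apply, ha, neg_zero]

/-- The integral semigroup ring `ℤ[E^×]`. -/
abbrev ZE (E : Type) [SemilatticeWithZero E] : Type := ↥(ZS E)

lemma mem_ZS {x : MonoidAlgebra ℤ E} : x ∈ ZS E ↔ x.coeff 0 = 0 := Iff.rfl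

lemma T_eq_self {x : MonoidAlgebra ℤ E} (h : x.coeff 0 = 0) : T x = x := by
  simp [T, h, sgl]

lemma T_add (a b : MonoidAlgebra ℤ E) : T (a + b) = T a + T b := by
  unfold T
  rw [show ((a + b).coeff 0) = a.coeff 0 + b.coeff 0 from Finsupp.add_apply a.coeff b.coeff 0, sgl_add]
  abel

lemma T_sub_sgl (x : MonoidAlgebra ℤ E) (m : ℤ) : T (x - sgl 0 m) = T x := by
  unfold T
  have h : ((x - sgl 0 m : MonoidAlgebra ℤ E)).coeff 0 = x.coeff 0 - m := by
    rw [MonoidAlgebra.coeff_sub, Finsupp.sub_apply, sgl_apply_self]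
  rw [h, sgl_sub]
  abel

lemma single_zero_mul (c : ℤ) (b : MonoidAlgebra ℤ E) :
    (sgl 0 c) * b = sgl 0 (((sgl 0 c * b : MonoidAlgebra ℤ E)).coeff 0) := by
  classical
  ext d
  by_cases hd : d = 0
  · subst hd; rw [sgl_apply_self]
  · rw [sgl_apply_ne 0 d _ (Ne.symm hd)]
    by_contra h
    have hmem : d ∈ ((sgl (0:E) c) * b).coeff.support := Finsupp.mem_support_iff.mpr h
    have h2 := MonoidAlgebra.support_coeff_mul_subset (sgl (0:E) c) b hmem
    rw [Finset.mem_mul] at h2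
    obtain ⟨a, ha, b', _, hab⟩ := h2
    have ha' : a = 0 := by
      have := Finsupp.support_single_subset (ha : a ∈ (Finsupp.single (0:E) c).support)
      simpa using this
    exact hd (by rw [← hab, ha', SemilatticeWithZero.zero_mul])

lemma T_mul_left (a b : MonoidAlgebra ℤ E) : T (T a * b) = T (a * b) := by
  have h1 : T a * b = a * b - (sgl 0 (a.coeff 0)) * b := by rw [T, sub_mul]
  rw [h1, single_zero_mul, T_sub_sgl]

lemma T_mul_right (a b : MonoidAlgebra ℤ E) : T (a * T b) = T (a * b) := by
  rw [mul_comm a (T b), T_mul_left, mul_comm]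

noncomputable instance : Mul (ZE E) :=
  ⟨fun x y => ⟨T (x.1 * y.1), T_apply_zero _⟩⟩

lemma ZE.val_mul (x y : ZE E) : (x * y).1 = T (x.1 * y.1) := rfl

noncomputable instance : NonUnitalCommRing (ZE E) :=
  { (inferInstance : AddCommGroup (ZE E)) with
    mul := (· * ·)
    left_distrib := by
      intro x y z
      apply Subtype.ext
      show T (x.1 * (y.1 + z.1)) = T (x.1 * y.1) + T (x.1 * z.1)
      rw [mul_add, T_add]
    right_distrib := by
      intro x y z
      apply Subtype.ext
      show T ((x.1 + y.1) * z.1) = T (x.1 * z.1) + T (y.1 * z.1)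
      rw [add_mul, T_add]
    zero_mul := by
      intro x
      apply Subtype.ext
      show T ((0 : MonoidAlgebra ℤ E) * x.1) = 0
      rw [zero_mul]
      simp [T, sgl]
    mul_zero := by
      intro x
      apply Subtype.ext
      show T (x.1 * (0 : MonoidAlgebra ℤ E)) = 0
      rw [mul_zero]
      simp [T, sgl]
    mul_assoc := by
      intro x y z
      apply Subtype.ext
      show T (T (x.1 * y.1) * z.1) = T (x.1 * T (y.1 * z.1))
      rw [T_mul_left, T_mul_right, mul_assoc]
    mul_comm := by
      intro x y
      apply Subtype.ext
      show T (x.1 * y.1) = T (y.1 * x.1)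
      rw [mul_comm] }

/-- The canonical image of `e ∈ E` in `ℤ[E^×]`: the basis element `e` if `e ≠ 0`,
and `0` if `e = 0`. -/
noncomputable def elt (e : E) : ZE E := ⟨T (sgl e 1), T_apply_zero _⟩

/-- Product of a (nonempty) finite family in a commutative non-unital ring, computed inside
the unitization.  For a nonempty index set this is the iterated product. -/
noncomputable def nprod {ι A : Type} [NonUnitalCommRing A] (s : Finset ι) (f : ι → A) : A :=
  (∏ j ∈ s, (Unitization.inr (f j) : Unitization ℤ A)).snd

/-- The join `⋁_{j ∈ J} x_j = ∑_{∅ ≠ J' ⊆ J} (-1)^{|J'|+1} ∏_{j ∈ J'} x_j`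
of a finite family of idempotents of a commutative non-unital ring. -/
noncomputable def rjoin {ι A : Type} [NonUnitalCommRing A] (s : Finset ι) (f : ι → A) : A :=
  ∑ t ∈ s.powerset.filter (fun t => t.Nonempty), ((-1 : ℤ) ^ (t.card + 1)) • nprod t f

/-- The join `⋁_{j ∈ J} e_j ∈ ℤ[E^×]` of a finite family of elements of `E`:
`∑_{∅ ≠ J' ⊆ J} (-1)^{|J'|+1} ∏_{j ∈ J'} e_j`, where a product whose value in `E`
is `0` contributes `0`. -/
noncomputable def join {ι : Type} (s : Finset ι) (e : ι → E) : ZE E :=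
  rjoin s (fun j => elt (e j))

/-- Iterated product of a nonempty list in a semigroup with zero (the value on the
empty list is the junk value `0`). -/
def listProd : List E → E
  | [] => 0
  | [a] => a
  | a :: b :: l => a * listProd (b :: l)

/-- The product `∏_{j ∈ s} f j ∈ E` of a (nonempty) finite family. -/
noncomputable def eprod {ι : Type} (s : Finset ι) (f : ι → E) : E :=
  listProd (s.toList.map f)

/-- The support `E(x)` of `x ∈ ℤ[E^×]`: the finite set of elements of `E^×` appearing
with a nonzero coefficient in the reduced form of `x`. -/
noncomputable def supp (x : ZE E) : Finset E := x.1.coeff.support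

section Action

variable {Γ : Type} [Group Γ] [MulAction Γ E]

/-- The induced action of `g ∈ Γ` on `ℤ[E^×]`: the `ℤ`-linear map sending a basis
element `e ∈ E^×` to `g • e`.  (When the action fixes `0` — which is the case for an
action by semigroup automorphisms fixing `0` — the truncation `T` is a no-op, and this
is the automorphism of `ℤ[E^×]` induced by `τ_g`.) -/
noncomputable def act (g : Γ) (x : ZE E) : ZE E :=
  ⟨T (MonoidAlgebra.mapDomain (fun e : E => g • e) x.1), T_apply_zero _⟩

end Action



attribute [local instance] Classical.propDecidable

variable {E : Type} [SemilatticeWithZero E]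

/-- A Γ-semilattice structure: the group acts by semigroup automorphisms fixing `0`. -/
def IsGammaSL (Γ E : Type) [Group Γ] [SemilatticeWithZero E] [MulAction Γ E] : Prop :=
  (∀ (g : Γ) (x y : E), g • (x * y) = (g • x) * (g • y)) ∧ (∀ g : Γ, g • (0 : E) = 0)

/-- The set `E_φ`. -/
def Ephi {D : Type} [NonUnitalCommRing D] (φ : ZE E →ₙ+* D) : Set (ZE E) :=
  { x | ∃ (e : E) (J : Finset E), e ≠ 0 ∧ (∀ f ∈ J, f ≠ 0 ∧ f * e = f ∧ f ≠ e) ∧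
      x = elt e - join J (fun f => f) ∧
      φ (elt e) = rjoin J (fun f => φ (elt f)) }

/-- `R` is a finite cover for `e ∈ E^×`. -/
def IsCover (e : E) (R : Finset E) : Prop :=
  (∀ f ∈ R, f ≠ 0 ∧ f * e = f) ∧
  ∀ f' : E, f' ≠ 0 → f' * e = f' → ∃ f ∈ R, f' * f ≠ 0

/-- `ℛ` is a collection of finite covers for `E`. -/
def CovSystem (ℛ : E → Set (Finset E)) : Prop :=
  ∀ e : E, e ≠ 0 → ∀ R ∈ ℛ e, IsCover e R

/-- Condition (i). -/
def CondI (ℛ : E → Set (Finset E)) : Prop :=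
  ∀ d e : E, d ≠ 0 → e ≠ 0 → d * e ≠ 0 → ∀ R ∈ ℛ e,
    d * e ∈ (R.image (fun f => d * f)).erase 0 ∨ (R.image (fun f => d * f)).erase 0 ∈ ℛ (d * e)

/-- Condition (ii). -/
def CondII (ℛ : E → Set (Finset E)) : Prop :=
  ∀ e : E, e ≠ 0 → ∀ r : ℕ, 0 < r → ∀ Rs : Fin r → Finset E,
    Function.Injective Rs → (∀ i, Rs i ∈ ℛ e) → ∀ ε : Fin r → E,
    (∀ i, ε i ∈ supp (join (Rs i) (fun f => f))) → ∀ j : Fin r,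
      (if r = 1 then e else eprod (Finset.univ.erase j) ε) ≠ 0 →
      eprod Finset.univ ε * (if r = 1 then e else eprod (Finset.univ.erase j) ε)
          = eprod Finset.univ ε ∧
      eprod Finset.univ ε ≠ (if r = 1 then e else eprod (Finset.univ.erase j) ε)

/-- Condition (iii). -/
def CondIII (Γ : Type) [Group Γ] [MulAction Γ E] (ℛ : E → Set (Finset E)) : Prop :=
  ∀ (g : Γ) (e : E), e ≠ 0 →
    (fun R : Finset E => R.image (fun f => g • f)) '' (ℛ e) = ℛ (g • e)

/-- `e(𝒮) = ∏_{R ∈ 𝒮} (e - ⋁R) ∈ ℤ[E^×]`. -/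
noncomputable def eS (e : E) (S : Finset (Finset E)) : ZE E :=
  nprod S (fun R => elt e - join R (fun f => f))

/-- `E(E,ℛ) = {e(𝒮) : e ∈ E^×, 𝒮 ⊆ ℛ(e) nonempty finite} ∪ {0} ⊆ ℤ[E^×]`. -/
def EER (ℛ : E → Set (Finset E)) : Set (ZE E) :=
  {x | ∃ (e : E) (S : Finset (Finset E)), e ≠ 0 ∧ S.Nonempty ∧ ↑S ⊆ ℛ e ∧ x = eS e S} ∪ {0}

/-- `R(𝒮,R̃) = {e(𝒮 ∪ {R̃})} ∪ {f ⬝ e(𝒮) : f ∈ R̃, f ⬝ e(𝒮) ≠ 0}`. -/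
noncomputable def RSR (e : E) (S : Finset (Finset E)) (Rt : Finset E) : Finset (ZE E) :=
  insert (eS e (insert Rt S)) ((Rt.image (fun f => elt f * eS e S)).erase 0)

/-- The collection of finite covers `ℛ(E,ℛ)` on `E(E,ℛ)`, assigning to an element
`x = e(𝒮)` of `E(E,ℛ)^×` the covers `R(𝒮,R̃)`, `R̃ ∈ ℛ(e) ∖ 𝒮` (over all ways of
presenting `x` in the form `e(𝒮)`). -/
def RER (ℛ : E → Set (Finset E)) (x : ZE E) : Set (Finset (ZE E)) :=
  {C | ∃ (e : E) (S : Finset (Finset E)) (Rt : Finset E),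
        e ≠ 0 ∧ S.Nonempty ∧ ↑S ⊆ ℛ e ∧ Rt ∈ ℛ e ∧ Rt ∉ S ∧ x = eS e S ∧ C = RSR e S Rt}

/-- The `ℤ`-linear map `ℤ[E₁^×] → ℤ[E₂^×]` induced by a map `θ` from `E₁` to `ℤ[E₂^×]`,
sending a basis element `e' ∈ E₁^×` to `θ e'`. -/
noncomputable def indMap {E₁ E₂ : Type} [SemilatticeWithZero E₁] [SemilatticeWithZero E₂]
    (θ : E₁ → ZE E₂) : ZE E₁ →ₗ[ℤ] ZE E₂ :=
  (Finsupp.linearCombination ℤ θ).comp ((MonoidAlgebra.coeffAddEquiv.toAddMonoidHom.comp (ZS E₁).subtype).toIntLinearMap)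

/-- `(E₁, ℛ₁, θ)` is a realization of the construction `(E(E,ℛ), ℛ(E,ℛ))`:
`θ` identifies the abstract Γ-semilattice `E₁` with `E(E,ℛ) ⊆ ℤ[E^×]` (equivariantly,
multiplicatively and preserving `0`), and `ℛ₁` corresponds to `ℛ(E,ℛ)` under this
identification. -/
def Realizes {Γ E E₁ : Type} [Group Γ] [SemilatticeWithZero E] [MulAction Γ E]
    [SemilatticeWithZero E₁] [MulAction Γ E₁]
    (ℛ : E → Set (Finset E)) (ℛ₁ : E₁ → Set (Finset E₁)) (θ : E₁ → ZE E) : Prop :=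
  Function.Injective θ ∧ Set.range θ = EER ℛ ∧ θ 0 = 0 ∧
  (∀ x y : E₁, θ (x * y) = θ x * θ y) ∧
  (∀ (g : Γ) (x : E₁), θ (g • x) = act g (θ x)) ∧
  (∀ e' : E₁, e' ≠ 0 → ∀ C : Finset E₁, C ∈ ℛ₁ e' ↔ C.image θ ∈ RER ℛ (θ e'))

end IndRes

open IndRes


/-! Let `E` be the free Γ-semilattice with zero on the idempotents of `D`: the finite subsets of
`Γ × {d // d² = d}`, nonempty ones multiplied by union and `∅` as zero, `Γ` acting by left
translation on the first factor. A finite set fixed by `g` contains a whole orbit `{(gⁿ γ, d)}`,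
so `g` has finite order and hence `g = 1`. Sending `S` to the product of the idempotents `γ • d`,
`(γ, d) ∈ S`, is multiplicative because repeated factors of a product of commuting idempotents
can be dropped, and is equivariant because `Γ` acts by ring automorphisms. Its `ℤ`-linear
extension to `ℤ[E×]` is the required `φ`; it is onto since every idempotent `d` is the image of
`{(1, d)}`. -/

theorem Finset.prod_insert_of_isIdempotentElem {ι M : Type} [CommMonoid M] [DecidableEq ι]
    {f : ι → M} (hf : ∀ i, IsIdempotentElem (f i)) (i : ι) (s : Finset ι) :
    ∏ j ∈ insert i s, f j = f i * ∏ j ∈ s, f j := by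
  by_cases hi : i ∈ s
  · rw [Finset.insert_eq_self.mpr hi, ← Finset.mul_prod_erase s f hi, ← mul_assoc, (hf i).eq]
  · exact Finset.prod_insert hi

theorem Finset.prod_union_of_isIdempotentElem {ι M : Type} [CommMonoid M] [DecidableEq ι]
    {f : ι → M} (hf : ∀ i, IsIdempotentElem (f i)) (s t : Finset ι) :
    ∏ j ∈ s ∪ t, f j = (∏ j ∈ s, f j) * ∏ j ∈ t, f j := by
  induction s using Finset.induction_on with
  | empty => simp
  | insert i s hi ih =>
    rw [Finset.insert_union, Finset.prod_insert_of_isIdempotentElem hf, ih, Finset.prod_insert hi,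
      mul_assoc]

namespace IndRes

section NProd

variable {ι A : Type} [NonUnitalCommRing A] {f : ι → A}

@[simp]
theorem nprod_empty (f : ι → A) : nprod ∅ f = 0 := by
  simp [nprod]

@[simp]
theorem nprod_singleton (i : ι) : nprod {i} f = f i := by
  simp [nprod]

theorem inr_nprod {s : Finset ι} (hs : s.Nonempty) :
    Unitization.inr (R := ℤ) (nprod s f) = ∏ i ∈ s, Unitization.inr (f i) := by
  refine Unitization.ext ?_ rfl
  rw [Unitization.fst_inr, eq_comm]
  induction hs using Finset.Nonempty.cons_induction with
  | singleton i => simp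
  | cons i s hi hs ih => simp [ih]

theorem nprod_cons {s : Finset ι} (hs : s.Nonempty) {i : ι} (hi : i ∉ s) :
    nprod (s.cons i hi) f = f i * nprod s f := by
  apply Unitization.inr_injective (R := ℤ)
  rw [inr_nprod (Finset.cons_nonempty hi), Finset.prod_cons, Unitization.inr_mul, inr_nprod hs]

theorem map_nprod {B : Type} [NonUnitalCommRing B] (ψ : A →ₙ* B) {s : Finset ι}
    (hs : s.Nonempty) : ψ (nprod s f) = nprod s (ψ ∘ f) := by
  induction hs using Finset.Nonempty.cons_induction with
  | singleton i => simp
  | cons i s hi hs ih => rw [nprod_cons hs, nprod_cons hs, map_mul, ih, Function.comp_apply]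

theorem nprod_image {κ : Type} [DecidableEq κ] {e : ι → κ} (he : Function.Injective e)
    (s : Finset ι) (f : κ → A) : nprod (s.image e) f = nprod s (f ∘ e) := by
  rw [nprod, Finset.prod_image he.injOn, nprod, Function.comp_def]

theorem nprod_union [DecidableEq ι] (hf : ∀ i, IsIdempotentElem (f i)) {s t : Finset ι}
    (hs : s.Nonempty) (ht : t.Nonempty) : nprod (s ∪ t) f = nprod s f * nprod t f := by
  apply Unitization.inr_injective (R := ℤ)
  rw [Unitization.inr_mul, inr_nprod (hs.mono Finset.subset_union_left), inr_nprod hs,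
    inr_nprod ht, Finset.prod_union_of_isIdempotentElem fun i => by
      rw [IsIdempotentElem, ← Unitization.inr_mul, (hf i).eq]]

end NProd

section Lift

variable {E D : Type} [SemilatticeWithZero E] [NonUnitalCommRing D] (Φ : E →ₙ* D)

theorem liftMagma_single (e : E) (c : ℤ) :
    MonoidAlgebra.liftMagma ℤ Φ (MonoidAlgebra.single e c) = c • Φ e :=
  (MonoidAlgebra.liftMagma_apply_apply ..).trans (Finsupp.sum_single_index (zero_smul ℤ _))

theorem liftMagma_T (hΦ : Φ 0 = 0) (z : MonoidAlgebra ℤ E) :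
    MonoidAlgebra.liftMagma ℤ Φ (T z) = MonoidAlgebra.liftMagma ℤ Φ z := by
  rw [T, sgl, MonoidAlgebra.ofCoeff_single, map_sub, liftMagma_single, hΦ, smul_zero, sub_zero]

noncomputable def liftZE (hΦ : Φ 0 = 0) : ZE E →ₙ+* D where
  toFun x := MonoidAlgebra.liftMagma ℤ Φ x.1
  map_mul' x y := by rw [ZE.val_mul, liftMagma_T Φ hΦ, map_mul]
  map_zero' := map_zero _
  map_add' x y := map_add _ _ _

theorem liftZE_surjective (hΦ : Φ 0 = 0)
    (hgen : NonUnitalAlgebra.adjoin ℤ (Set.range Φ) = ⊤) : Function.Surjective (liftZE Φ hΦ) := by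
  have hrange : Set.range Φ ⊆ NonUnitalAlgHom.range (MonoidAlgebra.liftMagma ℤ Φ) := by
    rintro _ ⟨e, rfl⟩
    exact ⟨MonoidAlgebra.single e 1, (liftMagma_single Φ e 1).trans (one_smul ℤ _)⟩
  intro d
  obtain ⟨z, hz⟩ := NonUnitalAlgebra.adjoin_le hrange (NonUnitalAlgebra.eq_top_iff.mp hgen d)
  exact ⟨⟨T z, T_apply_zero z⟩, (liftMagma_T Φ hΦ z).trans hz⟩

theorem liftZE_act {Γ : Type} [Group Γ] [MulAction Γ E] [DistribMulAction Γ D] (hΦ : Φ 0 = 0)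
    (hΦact : ∀ (g : Γ) (e : E), Φ (g • e) = g • Φ e) (g : Γ) (x : ZE E) :
    liftZE Φ hΦ (act g x) = g • liftZE Φ hΦ x := by
  change MonoidAlgebra.liftMagma ℤ Φ (T _) = g • MonoidAlgebra.liftMagma ℤ Φ x.1
  rw [liftMagma_T Φ hΦ]
  induction x.1 using MonoidAlgebra.induction_linear with
  | zero => simp
  | add a b ha hb => rw [MonoidAlgebra.mapDomain_add, map_add, map_add, ha, hb, smul_add]
  | single e c =>
    rw [MonoidAlgebra.mapDomain_single, liftMagma_single, liftMagma_single, hΦact, smul_comm]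

end Lift

end IndRes

def FreeGammaSL (Γ X : Type) : Type := Finset (Γ × X)

namespace FreeGammaSL

variable {Γ X : Type} [DecidableEq Γ] [DecidableEq X]

def unionOfNonempty (S T : Finset (Γ × X)) : Finset (Γ × X) :=
  if S.Nonempty ∧ T.Nonempty then S ∪ T else ∅

theorem unionOfNonempty_comm (S T : Finset (Γ × X)) :
    unionOfNonempty S T = unionOfNonempty T S := by
  simp only [unionOfNonempty, and_comm, Finset.union_comm]

theorem unionOfNonempty_self (S : Finset (Γ × X)) : unionOfNonempty S S = S := by
  unfold unionOfNonempty
  split_ifs with hS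
  · exact Finset.union_self S
  · simpa [eq_comm] using hS

theorem empty_unionOfNonempty (S : Finset (Γ × X)) : unionOfNonempty ∅ S = ∅ := by
  simp [unionOfNonempty]

theorem unionOfNonempty_assoc (S T U : Finset (Γ × X)) :
    unionOfNonempty (unionOfNonempty S T) U = unionOfNonempty S (unionOfNonempty T U) := by
  unfold unionOfNonempty
  by_cases hS : S.Nonempty <;> by_cases hT : T.Nonempty <;> by_cases hU : U.Nonempty <;>
    simp [hS, hT, hU, Finset.union_assoc]

instance : SemilatticeWithZero (FreeGammaSL Γ X) where
  mul := unionOfNonempty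
  mul_assoc := unionOfNonempty_assoc
  mul_comm := unionOfNonempty_comm
  mul_idem := unionOfNonempty_self
  zero := (∅ : Finset (Γ × X))
  zero_mul := empty_unionOfNonempty

variable [Group Γ]

def translate (g : Γ) (S : Finset (Γ × X)) : Finset (Γ × X) :=
  S.image fun p => (g * p.1, p.2)

theorem mul_left_fst_injective (g : Γ) : Function.Injective fun p : Γ × X => (g * p.1, p.2) :=
  (mul_right_injective g).prodMap Function.injective_id

theorem translate_one (S : Finset (Γ × X)) : translate 1 S = S := by
  simp [translate]

theorem translate_mul (g h : Γ) (S : Finset (Γ × X)) :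
    translate (g * h) S = translate g (translate h S) := by
  simp [translate, Finset.image_image, Function.comp_def, mul_assoc]

theorem translate_unionOfNonempty (g : Γ) (S T : Finset (Γ × X)) :
    translate g (unionOfNonempty S T) = unionOfNonempty (translate g S) (translate g T) := by
  unfold unionOfNonempty translate
  split_ifs with h h' h' <;> simp_all [Finset.image_union]

theorem isOfFinOrder_of_translate_eq_self {g : Γ} {S : Finset (Γ × X)} (hS : S.Nonempty)
    (h : translate g S = S) : IsOfFinOrder g := by
  obtain ⟨p, hp⟩ := hS
  have hmem : ∀ n : ℕ, (g ^ n * p.1, p.2) ∈ S := by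
    intro n
    induction n with
    | zero => simpa using hp
    | succ n ih =>
      rw [← h]
      exact Finset.mem_image.mpr ⟨_, ih, by rw [pow_succ', mul_assoc]⟩
  by_contra hinf
  rw [← injective_pow_iff_not_isOfFinOrder] at hinf
  exact not_injective_infinite_finite (fun n : ℕ => (⟨_, hmem n⟩ : S))
    fun m n hmn => hinf (mul_right_cancel (congrArg (fun q => q.1.1) hmn))

instance : MulAction Γ (FreeGammaSL Γ X) where
  smul := translate
  one_smul := translate_one
  mul_smul := translate_mul

theorem isGammaSL : IsGammaSL Γ (FreeGammaSL Γ X) :=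
  ⟨translate_unionOfNonempty, fun _ => Finset.image_empty _⟩

theorem eq_one_of_smul_eq_self (hΓ : Monoid.IsTorsionFree Γ) {g : Γ} {S : FreeGammaSL Γ X}
    (hS : S ≠ 0) (h : g • S = S) : g = 1 := by
  by_contra hg
  exact hΓ g hg (isOfFinOrder_of_translate_eq_self (Finset.nonempty_iff_ne_empty.mpr hS) h)

section ProdHom

variable {D : Type} [NonUnitalCommRing D] [DistribMulAction Γ D]
  (hmul : ∀ (g : Γ) (x y : D), g • (x * y) = g • x * g • y)
  (ι : X → D) (hι : ∀ x, IsIdempotentElem (ι x))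

theorem nprod_unionOfNonempty {f : Γ × X → D} (hf : ∀ p, IsIdempotentElem (f p))
    (S T : Finset (Γ × X)) : nprod (unionOfNonempty S T) f = nprod S f * nprod T f := by
  unfold unionOfNonempty
  split_ifs with h
  · exact nprod_union hf h.1 h.2
  · rcases not_and_or.mp h with hS | hT
    · simp [Finset.not_nonempty_iff_eq_empty.mp hS]
    · simp [Finset.not_nonempty_iff_eq_empty.mp hT]

include hmul in
theorem nprod_translate (g : Γ) (S : Finset (Γ × X)) :
    nprod (translate g S) (fun p => p.1 • ι p.2) = g • nprod S fun p => p.1 • ι p.2 := by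
  rcases S.eq_empty_or_nonempty with rfl | hS
  · rw [translate, Finset.image_empty, nprod_empty, smul_zero]
  · rw [translate, nprod_image (mul_left_fst_injective g)]
    refine Eq.trans ?_ (map_nprod ⟨(g • ·), hmul g⟩ hS).symm
    congr 1
    funext p
    exact mul_smul g p.1 (ι p.2)

noncomputable def prodHom : FreeGammaSL Γ X →ₙ* D where
  toFun S := nprod (S : Finset (Γ × X)) fun p => p.1 • ι p.2
  map_mul' := nprod_unionOfNonempty fun p => by rw [IsIdempotentElem, ← hmul, (hι p.2).eq]

theorem prodHom_zero : prodHom hmul ι hι 0 = 0 :=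
  nprod_empty fun p : Γ × X => p.1 • ι p.2

theorem prodHom_singleton_one (x : X) :
    prodHom hmul ι hι ({((1 : Γ), x)} : Finset (Γ × X)) = ι x :=
  (nprod_singleton _).trans (one_smul Γ (ι x))

theorem prodHom_smul (g : Γ) (S : FreeGammaSL Γ X) :
    prodHom hmul ι hι (g • S) = g • prodHom hmul ι hι S :=
  nprod_translate hmul ι g S

end ProdHom

end FreeGammaSL

theorem statement_7 {Γ D : Type} [Group Γ] [NonUnitalCommRing D] [DistribMulAction Γ D]
    (hTF : Monoid.IsTorsionFree Γ)
    (hD : NonUnitalAlgebra.adjoin ℤ {d : D | d * d = d} = ⊤)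
    (hactD : ∀ (g : Γ) (x y : D), g • (x * y) = (g • x) * (g • y)) :
    ∃ (E : Type) (_ : SemilatticeWithZero E) (_ : MulAction Γ E),
      IsGammaSL Γ E ∧
      (∀ (g : Γ) (e : E), e ≠ 0 → g • e = e → g = 1) ∧
      ∃ φ : ZE E →ₙ+* D, Function.Surjective φ ∧
        ∀ (g : Γ) (x : ZE E), φ (act g x) = g • φ x := by
  classical
  set Φ := FreeGammaSL.prodHom hactD (Subtype.val : {d : D // IsIdempotentElem d} → D)
    Subtype.prop
  have hΦ_zero : Φ 0 = 0 := FreeGammaSL.prodHom_zero ..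
  have hΦ_gen : NonUnitalAlgebra.adjoin ℤ (Set.range Φ) = ⊤ := by
    refine NonUnitalAlgebra.eq_top_iff.mpr fun d => NonUnitalAlgebra.adjoin_mono ?_
      (hD ▸ NonUnitalAlgebra.mem_top : d ∈ NonUnitalAlgebra.adjoin ℤ {d : D | d * d = d})
    rintro d hd
    exact ⟨({(1, ⟨d, hd⟩)} : Finset _), FreeGammaSL.prodHom_singleton_one ..⟩
  exact ⟨FreeGammaSL Γ {d : D // IsIdempotentElem d}, inferInstance, inferInstance,
    FreeGammaSL.isGammaSL, fun g S hS hgS => FreeGammaSL.eq_one_of_smul_eq_self hTF hS hgS,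
    liftZE Φ hΦ_zero, liftZE_surjective Φ hΦ_zero hΦ_gen,
    liftZE_act Φ hΦ_zero (FreeGammaSL.prodHom_smul hactD _ Subtype.prop)⟩
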